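/- Given an integer r ≥ 3, natural numbers n_1, ..., n_r, and real numbers σ_2, ..., σ_{r-1} with s_* + σ_i ≠ 0 for each i, where s_* = 2(n_1 + n_r + 2), define 𝓘(κ) as below. Then (-κ)^{n_r+1} · e^{κ s_*} · 𝓘(κ) tends to n_r! · (-1)^{n_r} · s_*^{n_1} · (2n_r + 2) · ∏_{i=2}^{r-1} (s_* + σ_i)^{n_i} as κ → -∞. In particular, for all sufficiently negative κ, the sign of 𝓘(κ) equals the sign of (-1)^{n_r} · ∏_{i=2}^{r-1} (s_* + σ_i)^{n_i}. -/

import Mathlib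

/-!
Substituting `y = s_* - t` turns `e^{κ s_*} 𝓘(κ)` into a Laplace integral
`∫₀^{s_*} e^{κ t} t^{n_r} h(t) dt` with `h` continuous, and Watson's lemma gives
`λ^{m+1} ∫₀^s e^{-λt} t^m h(t) dt → m! h(0)` as `λ → ∞` (rescale `u = λt` and apply
dominated convergence against `C e^{-u} u^m`). Here `h(0)` is the stated constant; since it
is a positive multiple of `(-1)^{n_r} ∏ (s_* + σ_i)^{n_i} ≠ 0`, the sign of `𝓘(κ)` is
eventually that of this product.
-/

open MeasureTheory Filter Set Real
open scoped Nat Topology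

lemma integrableOn_exp_neg_mul_pow_Ioi (m : ℕ) :
    IntegrableOn (fun u : ℝ => exp (-u) * u ^ m) (Ioi 0) :=
  (GammaIntegral_convergent (s := m + 1) (by positivity)).congr_fun
    (fun u _ => by simp [← rpow_natCast]) measurableSet_Ioi

lemma integral_exp_neg_mul_pow_Ioi (m : ℕ) :
    ∫ u in Ioi (0 : ℝ), exp (-u) * u ^ m = m ! := by
  rw [← Gamma_nat_eq_factorial, Gamma_eq_integral (by positivity)]
  simp [← rpow_natCast]

lemma pow_succ_mul_intervalIntegral_exp_neg_mul (s : ℝ) {l : ℝ} (hl : l ≠ 0) (m : ℕ)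
    (h : ℝ → ℝ) :
    l ^ (m + 1) * ∫ t in (0 : ℝ)..s, exp (-(l * t)) * t ^ m * h t
      = ∫ u in (0 : ℝ)..l * s, exp (-u) * u ^ m * h (u / l) := by
  set f : ℝ → ℝ := fun u => exp (-u) * u ^ m * h (u / l)
  calc l ^ (m + 1) * ∫ t in (0 : ℝ)..s, exp (-(l * t)) * t ^ m * h t
      = l * ∫ t in (0 : ℝ)..s, f (l * t) := by
        rw [← intervalIntegral.integral_const_mul, ← intervalIntegral.integral_const_mul]
        refine intervalIntegral.integral_congr fun t _ => ?_
        simp only [f, mul_div_cancel_left₀ _ hl, mul_pow]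
        ring
    _ = ∫ u in (0 : ℝ)..l * s, f u := by
        rw [intervalIntegral.integral_comp_mul_left f hl, smul_eq_mul, mul_zero,
          mul_inv_cancel_left₀ hl]

lemma tendsto_intervalIntegral_exp_neg_mul_pow_mul_comp_div {s : ℝ} (hs : 0 < s) (m : ℕ)
    {h : ℝ → ℝ} (hh : Continuous h) :
    Tendsto (fun l : ℝ => ∫ u in (0 : ℝ)..l * s, exp (-u) * u ^ m * h (u / l)) atTop
      (𝓝 (m ! * h 0)) := by
  obtain ⟨C, hC⟩ :=
    (isCompact_Icc (a := 0) (b := s)).exists_bound_of_continuousOn hh.continuousOn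
  have hC0 : 0 ≤ C := (norm_nonneg _).trans (hC 0 ⟨le_rfl, hs.le⟩)
  set F : ℝ → ℝ → ℝ := fun l =>
    (Ioc 0 (l * s)).indicator fun u => exp (-u) * u ^ m * h (u / l)
  have hF : ∀ l, 0 < l →
      ∫ u in (0 : ℝ)..l * s, exp (-u) * u ^ m * h (u / l) = ∫ u in Ioi 0, F l u := by
    intro l hl
    rw [intervalIntegral.integral_of_le (by positivity),
      setIntegral_indicator measurableSet_Ioc, inter_eq_self_of_subset_right Ioc_subset_Ioi_self]
  have hbound : ∀ l, 0 < l → ∀ u, 0 < u → ‖F l u‖ ≤ C * (exp (-u) * u ^ m) := by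
    intro l hl u hu
    simp only [F]
    by_cases hmem : u ∈ Ioc 0 (l * s)
    · have hul : u / l ∈ Icc 0 s :=
        ⟨by positivity, (div_le_iff₀ hl).2 (by linarith [hmem.2])⟩
      rw [indicator_of_mem hmem, norm_mul, norm_of_nonneg (by positivity), mul_comm]
      exact mul_le_mul_of_nonneg_right (hC _ hul) (by positivity)
    · rw [indicator_of_notMem hmem, norm_zero]
      positivity
  have hpointwise : ∀ u, 0 < u → Tendsto (F · u) atTop (𝓝 (exp (-u) * u ^ m * h 0)) := by
    intro u hu
    have hev : ∀ᶠ l in atTop, exp (-u) * u ^ m * h (u / l) = F l u := by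
      filter_upwards [eventually_gt_atTop (u / s)] with l hl
      have hmem : u ∈ Ioc 0 (l * s) := ⟨hu, ((div_lt_iff₀ hs).1 hl).le⟩
      simp only [F, indicator_of_mem hmem]
    refine Tendsto.congr' hev (tendsto_const_nhds.mul ?_)
    exact hh.continuousAt.tendsto.comp (tendsto_const_nhds.div_atTop tendsto_id)
  have hlim : Tendsto (fun l => ∫ u in Ioi 0, F l u) atTop
      (𝓝 (∫ u in Ioi 0, exp (-u) * u ^ m * h 0)) := by
    refine tendsto_integral_filter_of_dominated_convergence (fun u => C * (exp (-u) * u ^ m))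
      (Eventually.of_forall fun l => ?_) ?_ ((integrableOn_exp_neg_mul_pow_Ioi m).const_mul C)
      ((ae_restrict_iff' measurableSet_Ioi).2 (ae_of_all _ hpointwise))
    · have hcont : Continuous fun u => exp (-u) * u ^ m * h (u / l) := by fun_prop
      exact (hcont.aestronglyMeasurable.indicator measurableSet_Ioc).restrict
    · filter_upwards [eventually_gt_atTop 0] with l hl
      exact (ae_restrict_iff' measurableSet_Ioi).2 (ae_of_all _ (hbound l hl))
  rw [← integral_exp_neg_mul_pow_Ioi, ← integral_mul_const]
  exact hlim.congr' ((eventually_gt_atTop 0).mono fun l hl => (hF l hl).symm)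

/-- Watson's lemma on a bounded interval. -/
theorem tendsto_pow_succ_mul_intervalIntegral_exp_neg_mul {s : ℝ} (hs : 0 < s) (m : ℕ)
    {h : ℝ → ℝ} (hh : Continuous h) :
    Tendsto (fun l : ℝ => l ^ (m + 1) * ∫ t in (0 : ℝ)..s, exp (-(l * t)) * t ^ m * h t)
      atTop (𝓝 (m ! * h 0)) :=
  (tendsto_intervalIntegral_exp_neg_mul_pow_mul_comp_div hs m hh).congr'
    ((eventually_gt_atTop 0).mono fun _ hl =>
      (pow_succ_mul_intervalIntegral_exp_neg_mul s hl.ne' m h).symm)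

lemma exp_mul_intervalIntegral_exp_neg_mul_mul_sub_pow (κ s : ℝ) (m : ℕ) (f : ℝ → ℝ) :
    exp (κ * s) * ∫ y in (0 : ℝ)..s, exp (-κ * y) * (y - s) ^ m * f y
      = ∫ t in (0 : ℝ)..s, exp (-(-κ * t)) * t ^ m * ((-1) ^ m * f (s - t)) := by
  set g : ℝ → ℝ := fun t => exp (-(-κ * t)) * t ^ m * ((-1) ^ m * f (s - t))
  have hreflect : ∫ y in (0 : ℝ)..s, g (s - y) = ∫ t in (0 : ℝ)..s, g t := by
    rw [intervalIntegral.integral_comp_sub_left g s]; simp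
  rw [← hreflect, ← intervalIntegral.integral_const_mul]
  refine intervalIntegral.integral_congr fun y _ => ?_
  have hpow : (y - s) ^ m = (-1) ^ m * (s - y) ^ m := by rw [← mul_pow, neg_one_mul, neg_sub]
  have hexp : exp (κ * s) * exp (-κ * y) = exp (-(-κ * (s - y))) := by
    rw [← exp_add]; ring_nf
  simp only [g, sub_sub_cancel, hpow, ← hexp]
  ring

lemma eventually_sign_eq_of_tendsto_mul {α : Type*} {l : Filter α} {f g : α → ℝ} {c b : ℝ}
    (hc : 0 < c) (hb : b ≠ 0) (hg : ∀ᶠ x in l, 0 < g x)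
    (hlim : Tendsto (fun x => g x * f x) l (𝓝 (c * b))) :
    ∀ᶠ x in l, Real.sign (f x) = Real.sign b := by
  rcases hb.lt_or_gt with hb | hb
  · filter_upwards [hlim.eventually (eventually_lt_nhds (mul_neg_of_pos_of_neg hc hb)), hg]
      with x hx hgx
    rw [sign_of_neg (neg_of_mul_neg_right hx hgx.le), sign_of_neg hb]
  · filter_upwards [hlim.eventually (eventually_gt_nhds (mul_pos hc hb)), hg] with x hx hgx
    rw [sign_of_pos (pos_of_mul_pos_right hx hgx.le), sign_of_pos hb]

theorem stmt_5_general (r : ℕ) (n : ℕ → ℕ) (σ : ℕ → ℝ)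
    (sstar : ℝ) (hsstar : sstar = 2 * ((n 1 : ℝ) + (n r : ℝ) + 2))
    (hσ : ∀ i ∈ Finset.Icc 2 (r - 1), sstar + σ i ≠ 0)
    (I : ℝ → ℝ)
    (hI : ∀ κ, I κ = ∫ y in (0:ℝ)..sstar,
        Real.exp (-κ * y) * y ^ n 1 * (y - sstar) ^ n r * (y - 2 * (n 1 : ℝ) - 2) *
          ∏ i ∈ Finset.Icc 2 (r - 1), (y + σ i) ^ n i) :
    Filter.Tendsto (fun κ : ℝ => (-κ) ^ (n r + 1) * Real.exp (κ * sstar) * I κ)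
      Filter.atBot
      (nhds ((Nat.factorial (n r) : ℝ) * (-1) ^ n r * sstar ^ n 1 *
        (2 * (n r : ℝ) + 2) * ∏ i ∈ Finset.Icc 2 (r - 1), (sstar + σ i) ^ n i)) ∧
    ∀ᶠ κ : ℝ in Filter.atBot,
      Real.sign (I κ) =
        Real.sign ((-1) ^ n r * ∏ i ∈ Finset.Icc 2 (r - 1), (sstar + σ i) ^ n i) := by
  have hs : 0 < sstar := by rw [hsstar]; positivity
  set P := ∏ i ∈ Finset.Icc 2 (r - 1), (sstar + σ i) ^ n i
  set g : ℝ → ℝ := fun y =>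
    y ^ n 1 * (y - 2 * n 1 - 2) * ∏ i ∈ Finset.Icc 2 (r - 1), (y + σ i) ^ n i
  have hg : g sstar = sstar ^ n 1 * (2 * n r + 2) * P := by
    simp only [g, P]; rw [hsstar]; ring
  have hreflect : ∀ κ, (-κ) ^ (n r + 1) * exp (κ * sstar) * I κ = (-κ) ^ (n r + 1) *
      ∫ t in (0 : ℝ)..sstar, exp (-(-κ * t)) * t ^ n r * ((-1) ^ n r * g (sstar - t)) := by
    intro κ
    rw [mul_assoc, ← exp_mul_intervalIntegral_exp_neg_mul_mul_sub_pow, hI]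
    congr 2
    exact intervalIntegral.integral_congr fun y _ => by simp only [g]; ring
  have hlim := (tendsto_pow_succ_mul_intervalIntegral_exp_neg_mul hs (n r)
    (h := fun t => (-1) ^ n r * g (sstar - t)) (by fun_prop)).comp tendsto_neg_atBot_atTop
  simp only [sub_zero, hg] at hlim
  have hL : (n r)! * ((-1) ^ n r * (sstar ^ n 1 * (2 * n r + 2) * P))
      = ((n r)! * sstar ^ n 1 * (2 * n r + 2)) * ((-1) ^ n r * P) := by ring
  rw [hL] at hlim
  have hT := hlim.congr fun κ => (hreflect κ).symm
  have hP : (-1) ^ n r * P ≠ 0 := mul_ne_zero (pow_ne_zero _ (by norm_num))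
    (Finset.prod_ne_zero_iff.2 fun i hi => pow_ne_zero _ (hσ i hi))
  have hweight : ∀ᶠ κ : ℝ in atBot, 0 < (-κ) ^ (n r + 1) * exp (κ * sstar) := by
    filter_upwards [eventually_lt_atBot 0] with κ hκ
    exact mul_pos (pow_pos (neg_pos.2 hκ) _) (exp_pos _)
  exact ⟨by convert hT using 2; ring,
    eventually_sign_eq_of_tendsto_mul (by positivity) hP hweight hT⟩

/-- Asymptotics of the invariant integral `𝓘(κ)` as `κ → -∞`:
`(-κ)^{n_r+1} e^{κ s_*} 𝓘(κ) → n_r! (-1)^{n_r} s_*^{n₁} (2n_r+2) ∏ (s_*+σᵢ)^{nᵢ}`,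
so for sufficiently negative `κ` the sign of `𝓘(κ)` is that of
`(-1)^{n_r} ∏ (s_*+σᵢ)^{nᵢ}`. -/
theorem stmt_5 (r : ℕ) (hr : 3 ≤ r) (n : ℕ → ℕ) (σ : ℕ → ℝ)
    (sstar : ℝ) (hsstar : sstar = 2 * ((n 1 : ℝ) + (n r : ℝ) + 2))
    (hσ : ∀ i ∈ Finset.Icc 2 (r - 1), sstar + σ i ≠ 0)
    (I : ℝ → ℝ)
    (hI : ∀ κ, I κ = ∫ y in (0:ℝ)..sstar,
        Real.exp (-κ * y) * y ^ n 1 * (y - sstar) ^ n r * (y - 2 * (n 1 : ℝ) - 2) *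
          ∏ i ∈ Finset.Icc 2 (r - 1), (y + σ i) ^ n i) :
    Filter.Tendsto (fun κ : ℝ => (-κ) ^ (n r + 1) * Real.exp (κ * sstar) * I κ)
      Filter.atBot
      (nhds ((Nat.factorial (n r) : ℝ) * (-1) ^ n r * sstar ^ n 1 *
        (2 * (n r : ℝ) + 2) * ∏ i ∈ Finset.Icc 2 (r - 1), (sstar + σ i) ^ n i)) ∧
    ∀ᶠ κ : ℝ in Filter.atBot,
      Real.sign (I κ) =
        Real.sign ((-1) ^ n r * ∏ i ∈ Finset.Icc 2 (r - 1), (sstar + σ i) ^ n i) :=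
  stmt_5_general r n σ sstar hsstar hσ I hI
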